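/- arXiv:2306.05687 — 14 statements merged into one kernel-verified Lean document; each statement's English description precedes it below -/
import Mathlib

section
/- Let R be a commutative ring with identity, I an ideal of R, and P a proper ideal of R. Then P is an I-prime ideal of R if and only if the image of P in the quotient ring R/(I·P) is a weakly prime ideal of R/(I·P). -/
/-- A proper ideal `P` of a commutative ring `R` is `I`-prime if whenever
`a * b ∈ P \ I*P`, then `a ∈ P` or `b ∈ P`. -/
def IsIPrime {R : Type*} [CommRing R] (I P : Ideal R) : Prop :=
  P ≠ ⊤ ∧ ∀ a b : R, a * b ∈ P → a * b ∉ I * P → a ∈ P ∨ b ∈ P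

/-- A proper ideal `Q` is weakly prime if whenever `a * b ∈ Q \ {0}`,
then `a ∈ Q` or `b ∈ Q`. -/
def IsWeaklyPrime {R : Type*} [CommRing R] (Q : Ideal R) : Prop :=
  Q ≠ ⊤ ∧ ∀ a b : R, a * b ∈ Q → a * b ≠ 0 → a ∈ Q ∨ b ∈ Q

open Ideal.Quotient in
theorem isWeaklyPrime_map_mk_iff {R : Type*} [CommRing R] {J P : Ideal R} (hJP : J ≤ P) :
    IsWeaklyPrime (P.map (mk J)) ↔
      P ≠ ⊤ ∧ ∀ a b : R, a * b ∈ P → a * b ∉ J → a ∈ P ∨ b ∈ P := by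
  have hmem (x : R) : mk J x ∈ P.map (mk J) ↔ x ∈ P := Ideal.mem_quotient_iff_mem hJP
  have hproper : P.map (mk J) ≠ ⊤ ↔ P ≠ ⊤ := by
    rw [ne_eq, ne_eq, Ideal.eq_top_iff_one, Ideal.eq_top_iff_one, ← map_one (mk J), hmem]
  rw [IsWeaklyPrime, hproper, mk_surjective.forall₂]
  simp only [← map_mul, hmem, ne_eq, eq_zero_iff_mem]

theorem stmt_0_general {R : Type*} [CommRing R] (I P : Ideal R) :
    IsIPrime I P ↔ IsWeaklyPrime (P.map (Ideal.Quotient.mk (I * P))) :=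
  (isWeaklyPrime_map_mk_iff Ideal.mul_le_right).symm

theorem stmt_0 {R : Type*} [CommRing R] (I P : Ideal R) (hP : P ≠ ⊤) :
    IsIPrime I P ↔ IsWeaklyPrime (P.map (Ideal.Quotient.mk (I * P))) :=
  stmt_0_general I P
end

section
/- Let f : R → S be a surjective ring homomorphism of commutative rings with identity, I an ideal of R, and P an I-prime ideal of R with ker f ⊆ P. Then the image ideal f(P) is an f(I)-prime ideal of S (here f(P) and f(I) denote the images of P and I, which are ideals of S since f is surjective). -/
theorem stmt_1 {R S : Type*} [CommRing R] [CommRing S] (f : R →+* S)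
    (hf : Function.Surjective f) (I P : Ideal R) (hP : IsIPrime I P)
    (hker : RingHom.ker f ≤ P) :
    IsIPrime (I.map f) (P.map f) := by
  obtain ⟨hPtop, hPprime⟩ := hP
  have hcomap : Ideal.comap f (Ideal.map f P) = P := by
    rw [Ideal.comap_map_of_surjective f hf]; exact sup_eq_left.mpr hker
  constructor
  · intro h
    apply hPtop
    rw [← hcomap, h, Ideal.comap_top]
  · intro a b hab hnab
    obtain ⟨a', rfl⟩ := hf a
    obtain ⟨b', rfl⟩ := hf b
    have h1 : a' * b' ∈ P := by
      rw [← hcomap]; simpa using hab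
    have h2 : a' * b' ∉ I * P := by
      intro h
      apply hnab
      rw [← Ideal.map_mul]
      simpa using Ideal.mem_map_of_mem f h
    rcases hPprime a' b' h1 h2 with h | h
    · exact Or.inl (Ideal.mem_map_of_mem f h)
    · exact Or.inr (Ideal.mem_map_of_mem f h)
end

section
/- Let R be a commutative ring with identity, I an ideal of R, and P an I-prime ideal of R that is not a prime ideal. Then P² ⊆ I·P. Equivalently, an I-prime ideal P with P² ⊄ I·P is a prime ideal. -/
theorem stmt_3 {R : Type*} [CommRing R] (I P : Ideal R) (hP : IsIPrime I P)
    (hnp : ¬ P.IsPrime) : P ^ 2 ≤ I * P := by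
  obtain ⟨hPtop, hIP⟩ := hP
  -- since P is not prime, obtain a,b with ab ∈ P, a ∉ P, b ∉ P
  have h : ∃ a b : R, a * b ∈ P ∧ a ∉ P ∧ b ∉ P := by
    by_contra h
    push_neg at h
    exact hnp ⟨hPtop, fun {a b} hab => by
      by_contra hc
      push_neg at hc
      exact hc.2 (h a b hab hc.1)⟩
  obtain ⟨a, b, hab, ha, hb⟩ := h
  have habIP : a * b ∈ I * P := by
    by_contra hc
    rcases hIP a b hab hc with h | h
    · exact ha h
    · exact hb h
  -- key: a*q ∈ I*P for q ∈ P
  have haq : ∀ q ∈ P, a * q ∈ I * P := by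
    intro q hq
    have h1 : a * (b + q) ∈ P := by
      rw [mul_add]; exact P.add_mem hab (P.mul_mem_left a hq)
    have h2 : a * (b + q) ∈ I * P := by
      by_contra hc
      rcases hIP a (b + q) h1 hc with h | h
      · exact ha h
      · exact hb (by simpa using P.sub_mem h hq)
    have := Ideal.sub_mem _ h2 habIP
    simpa [mul_add] using this
  have hpb : ∀ p ∈ P, p * b ∈ I * P := by
    intro p hp
    have h1 : (a + p) * b ∈ P := by
      rw [add_mul]; exact P.add_mem hab (P.mul_mem_right b hp)
    have h2 : (a + p) * b ∈ I * P := by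
      by_contra hc
      rcases hIP (a + p) b h1 hc with h | h
      · exact ha (by simpa using P.sub_mem h hp)
      · exact hb h
    have : (a + p) * b ∈ P := h1
    have := Ideal.sub_mem _ h2 habIP
    simpa [add_mul] using this
  have key : ∀ p ∈ P, ∀ q ∈ P, p * q ∈ I * P := by
    intro p hp q hq
    have h1 : (a + p) * (b + q) ∈ P := by
      have : (a + p) * (b + q) = a * b + a * q + p * b + p * q := by ring
      rw [this]
      exact P.add_mem (P.add_mem (P.add_mem hab (P.mul_mem_left a hq))
        (P.mul_mem_right b hp)) (P.mul_mem_right q hp)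
    have h2 : (a + p) * (b + q) ∈ I * P := by
      by_contra hc
      rcases hIP (a + p) (b + q) h1 hc with h | h
      · exact ha (by simpa using P.sub_mem h hp)
      · exact hb (by simpa using P.sub_mem h hq)
    have heq : p * q = (a + p) * (b + q) - a * b - a * q - p * b := by ring
    rw [heq]
    exact Ideal.sub_mem _ (Ideal.sub_mem _ (Ideal.sub_mem _ h2 habIP) (haq q hq)) (hpb p hp)
  rw [pow_two]
  exact Ideal.mul_le.mpr key
end

section
/- Let P be an I-prime ideal of a commutative ring R with identity such that I·P ⊆ P³. Then P is a K-prime ideal of R, where K = ⋂_{i=1}^{∞} Pⁱ is the intersection of all powers of P. -/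
theorem stmt_4 {R : Type*} [CommRing R] (I P : Ideal R) (hP : IsIPrime I P)
    (hIP : I * P ≤ P ^ 3) : IsIPrime (⨅ i : ℕ, P ^ (i + 1)) P := by
  by_cases hpr : P.IsPrime
  · exact ⟨hP.1, fun a b hab _ => hpr.mem_or_mem hab⟩
  -- P is not prime: obtain a, b with a*b ∈ P, a ∉ P, b ∉ P
  have hne : P ≠ ⊤ := hP.1
  rw [Ideal.isPrime_iff] at hpr
  push_neg at hpr
  obtain ⟨a, b, hab, haP, hbP⟩ := hpr hne
  have habI : a * b ∈ I * P := by
    by_contra h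
    rcases hP.2 a b hab h with h' | h' <;> [exact haP h'; exact hbP h']
  -- a * P ⊆ I * P
  have haMul : ∀ p ∈ P, a * p ∈ I * P := by
    intro p hp
    have h1 : a * (b + p) ∈ P := by
      rw [mul_add]; exact P.add_mem hab (P.mul_mem_left a hp)
    have h2 : a * (b + p) ∈ I * P := by
      by_contra h
      rcases hP.2 a (b + p) h1 h with h' | h'
      · exact haP h'
      · exact hbP (by simpa using P.sub_mem h' hp)
    have := (I * P).sub_mem h2 habI
    rw [mul_add] at this
    simpa using this
  have hbMul : ∀ p ∈ P, p * b ∈ I * P := by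
    intro p hp
    have h1 : (a + p) * b ∈ P := by
      rw [add_mul]; exact P.add_mem hab (P.mul_mem_right b hp)
    have h2 : (a + p) * b ∈ I * P := by
      by_contra h
      rcases hP.2 (a + p) b h1 h with h' | h'
      · exact haP (by simpa using P.sub_mem h' hp)
      · exact hbP h'
    have := (I * P).sub_mem h2 habI
    rw [add_mul] at this
    simpa using this
  -- P^2 ≤ I * P
  have hP2 : P * P ≤ I * P := by
    rw [Ideal.mul_le]
    intro p hp q hq
    have h1 : (a + p) * (b + q) ∈ P := by
      have : (a + p) * (b + q) = a * b + (a * q + (p * b + p * q)) := by ring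
      rw [this]
      exact P.add_mem hab (P.add_mem (P.mul_mem_left a hq)
        (P.add_mem (P.mul_mem_right b hp) (P.mul_mem_left p hq)))
    have h2 : (a + p) * (b + q) ∈ I * P := by
      by_contra h
      rcases hP.2 (a + p) (b + q) h1 h with h' | h'
      · exact haP (by simpa using P.sub_mem h' hp)
      · exact hbP (by simpa using P.sub_mem h' hq)
    have key : p * q = (a + p) * (b + q) - a * b - a * q - p * b := by ring
    rw [key]
    exact (I * P).sub_mem ((I * P).sub_mem ((I * P).sub_mem h2 habI)
      (haMul q hq)) (hbMul p hp)
  have hP2' : P ^ 2 ≤ I * P := by rw [pow_two]; exact hP2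
  -- P^2 ≤ P^(i+1) for all i
  have hpow : ∀ i : ℕ, P ^ 2 ≤ P ^ (i + 1) := by
    intro i
    induction i with
    | zero => rw [pow_one, pow_two]; exact Ideal.mul_le_right
    | succ n ih =>
      calc P ^ 2 ≤ I * P := hP2'
        _ ≤ P ^ 3 := hIP
        _ = P ^ 2 * P := by ring
        _ ≤ P ^ (n + 1) * P := Ideal.mul_mono_left ih
        _ = P ^ (n + 2) := (pow_succ P (n + 1)).symm
  have hKle : I * P ≤ (⨅ i : ℕ, P ^ (i + 1)) * P := by
    calc I * P ≤ P ^ 3 := hIP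
      _ = P ^ 2 * P := by ring
      _ ≤ (⨅ i : ℕ, P ^ (i + 1)) * P :=
        Ideal.mul_mono_left (le_iInf fun i => hpow i)
  exact ⟨hne, fun x y hxy hK => hP.2 x y hxy fun h => hK (hKle h)⟩
end

section
/- Let R be a commutative ring with identity, I an ideal of R, and P an I-prime ideal of R which is not a prime ideal. Then √P = √(I·P), where √J denotes the radical of the ideal J. -/
/-! A witness `a * b ∈ P` with `a, b ∉ P` stays a witness after translating `a` and `b` by
elements of `P`, so every product `(a + p) * (b + q)` lies in `I * P`; expanding by
inclusion–exclusion in `p` and `q` puts `p * q` in `I * P`. Hence `P ^ 2 ⊆ I * P ⊆ P`, and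
the three ideals share their radical. -/

namespace IsIPrime

variable {R : Type*} [CommRing R] {I P : Ideal R}

theorem add_mul_add_mem (hP : IsIPrime I P) {a b : R} (hab : a * b ∈ P) (ha : a ∉ P)
    (hb : b ∉ P) {p q : R} (hp : p ∈ P) (hq : q ∈ P) : (a + p) * (b + q) ∈ I * P := by
  by_contra hnotin
  have hmem : (a + p) * (b + q) ∈ P := by
    rw [show (a + p) * (b + q) = a * b + (a * q + p * (b + q)) by ring]
    exact add_mem hab (add_mem (P.mul_mem_left a hq) (P.mul_mem_right _ hp))
  rcases hP.2 _ _ hmem hnotin with h | h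
  · exact ha ((P.add_mem_iff_left hp).mp h)
  · exact hb ((P.add_mem_iff_left hq).mp h)

theorem mul_le_of_not_isPrime (hP : IsIPrime I P) (hnp : ¬ P.IsPrime) : P * P ≤ I * P := by
  obtain ⟨a, b, hab, ha, hb⟩ : ∃ a b, a * b ∈ P ∧ a ∉ P ∧ b ∉ P := by
    simpa [Ideal.isPrime_iff, hP.1, not_or] using hnp
  have key : ∀ {p q}, p ∈ P → q ∈ P → (a + p) * (b + q) ∈ I * P :=
    hP.add_mul_add_mem hab ha hb
  refine Ideal.mul_le.mpr fun p hp q hq => ?_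
  rw [show p * q = (a + p) * (b + q) - (a + p) * (b + 0) - (a + 0) * (b + q)
      + (a + 0) * (b + 0) by ring]
  exact add_mem (sub_mem (sub_mem (key hp hq) (key hp P.zero_mem)) (key P.zero_mem hq))
    (key P.zero_mem P.zero_mem)

end IsIPrime

theorem stmt_5 {R : Type*} [CommRing R] (I P : Ideal R) (hP : IsIPrime I P)
    (hnp : ¬ P.IsPrime) : P.radical = (I * P).radical := by
  refine le_antisymm ?_ (Ideal.radical_mono Ideal.mul_le_right)
  calc P.radical = (P * P).radical := by rw [Ideal.radical_mul, inf_idem]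
    _ ≤ (I * P).radical := Ideal.radical_mono (hP.mul_le_of_not_isPrime hnp)
end

section
/- Let R and S be commutative rings with identity, let P be a weakly prime ideal of R, and let I be an ideal of the product ring R × S such that ⋂_{i=1}^{∞} (P × S)ⁱ ⊆ I·(P × S). Then P × S is an I-prime ideal of R × S. -/
theorem stmt_6 {R S : Type*} [CommRing R] [CommRing S] (P : Ideal R)
    (hP : IsWeaklyPrime P) (I : Ideal (R × S))
    (hI : (⨅ i : ℕ, (Ideal.prod P ⊤) ^ (i + 1)) ≤ I * Ideal.prod P ⊤) :
    IsIPrime I (Ideal.prod P (⊤ : Ideal S)) := by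
  constructor
  · intro h
    apply hP.1
    rw [Ideal.eq_top_iff_one] at h ⊢
    exact ((Ideal.mem_prod _ _).mp h).1
  · rintro ⟨a, s⟩ ⟨b, t⟩ hmem hnot
    by_cases hab : a * b = 0
    · exfalso
      apply hnot
      apply hI
      refine Ideal.mem_iInf.mpr fun i => ?_
      have h01 : ((0 : R), (1 : S)) ∈ (Ideal.prod P (⊤ : Ideal S)) ^ (i + 1) := by
        have hm : ((0 : R), (1 : S)) ∈ Ideal.prod P (⊤ : Ideal S) :=
          (Ideal.mem_prod _ _).mpr ⟨P.zero_mem, trivial⟩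
        have := Ideal.pow_mem_pow hm (i + 1)
        have heq : (((0 : R), (1 : S)) : R × S) ^ (i + 1) = ((0 : R), (1 : S)) := by
          ext <;> simp
        rwa [heq] at this
      have heq : ((a, s) : R × S) * (b, t) = ((a, s) * (b, t)) * ((0 : R), (1 : S)) := by
        ext <;> simp [hab]
      rw [heq]
      exact Ideal.mul_mem_left _ _ h01
    · have habP : a * b ∈ P := ((Ideal.mem_prod _ _).mp hmem).1
      rcases hP.2 a b habP hab with h | h
      · exact Or.inl ((Ideal.mem_prod _ _).mpr ⟨h, trivial⟩)
      · exact Or.inr ((Ideal.mem_prod _ _).mpr ⟨h, trivial⟩)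
end

section
/- Let P be a finitely generated proper ideal of a commutative ring R with identity, and suppose P is an I-prime ideal with I·P ⊆ P³. Then either P is a weakly prime ideal, or P² ≠ 0 and P² is generated by a single nonzero idempotent element e of R (so that P² is a nonzero idempotent ideal). -/
theorem stmt_7 {R : Type*} [CommRing R] (I P : Ideal R) (hfg : P.FG)
    (hP : IsIPrime I P) (hIP : I * P ≤ P ^ 3) :
    IsWeaklyPrime P ∨
      (P ^ 2 ≠ ⊥ ∧ ∃ e : R, IsIdempotentElem e ∧ e ≠ 0 ∧ P ^ 2 = Ideal.span {e}) := by
  by_cases hwp : IsWeaklyPrime P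
  · exact Or.inl hwp
  right
  -- extract a counterexample to weak primeness
  rw [IsWeaklyPrime, not_and] at hwp
  have hne := hwp hP.1
  push_neg at hne
  obtain ⟨a, b, habP, hab0, haP, hbP⟩ := hne
  -- any product in P with both factors outside P lies in I*P
  have key : ∀ x y : R, x * y ∈ P → x ∉ P → y ∉ P → x * y ∈ I * P := by
    intro x y hxy hx hy
    by_contra h
    rcases hP.2 x y hxy h with h' | h' <;> [exact hx h'; exact hy h']
  -- P^2 ⊆ I*P
  have h2 : P ^ 2 ≤ I * P := by
    rw [pow_two]
    refine Ideal.mul_le.mpr fun p hp q hq => ?_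
    have hap : a + p ∉ P := fun h => haP (by simpa using P.sub_mem h hp)
    have hbq : b + q ∉ P := fun h => hbP (by simpa using P.sub_mem h hq)
    have h1 : (a + p) * (b + q) ∈ I * P :=
      key _ _ (by ring_nf; exact P.add_mem (P.add_mem (P.add_mem habP
        (P.mul_mem_left a hq)) (P.mul_mem_right b hp)) (P.mul_mem_left p hq)) hap hbq
    have h2 : a * (b + q) ∈ I * P :=
      key _ _ (by ring_nf; exact P.add_mem habP (P.mul_mem_left a hq)) haP hbq
    have h3 : (a + p) * b ∈ I * P :=
      key _ _ (by ring_nf; exact P.add_mem habP (P.mul_mem_right b hp)) hap hbP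
    have h4 : a * b ∈ I * P := key _ _ habP haP hbP
    have : p * q = (a + p) * (b + q) - a * (b + q) - (a + p) * b + a * b := by ring
    rw [this]
    exact Submodule.add_mem _ (Submodule.sub_mem _ (Submodule.sub_mem _ h1 h2) h3) h4
  -- P^2 = P^3
  have h23 : P ^ 2 = P ^ 3 :=
    le_antisymm (h2.trans hIP) (Ideal.pow_le_pow_right (by norm_num))
  -- P^2 is idempotent
  have hid : IsIdempotentElem (P ^ 2) := by
    show P ^ 2 * P ^ 2 = P ^ 2
    rw [← pow_add]
    have h24 : P ^ 2 = P ^ 4 := by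
      calc P ^ 2 = P ^ 3 := h23
        _ = P ^ 2 * P := by ring
        _ = P ^ 3 * P := by rw [← h23]
        _ = P ^ 4 := by ring
    exact h24.symm
  have h2fg : (P ^ 2).FG := by rw [pow_two]; exact Submodule.FG.mul hfg hfg
  obtain ⟨e, he, hspan⟩ := (Ideal.isIdempotentElem_iff_of_fg _ h2fg).mp hid
  have hbot : P ^ 2 ≠ ⊥ := by
    intro h
    have : a * b ∈ P ^ 2 := h23 ▸ hIP (key a b habP haP hbP)
    rw [h, Ideal.mem_bot] at this
    exact hab0 this
  refine ⟨hbot, e, he, fun h => hbot ?_, hspan⟩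
  rw [hspan, h]; simp
end

section
/- Let R be an indecomposable commutative ring with identity (i.e., its only idempotent elements are 0 and 1) and let P be a finitely generated I-prime ideal of R with I·P ⊆ P³. Then P is a weakly prime ideal of R. -/
theorem stmt_8 {R : Type*} [CommRing R]
    (hind : ∀ e : R, IsIdempotentElem e → e = 0 ∨ e = 1)
    (I P : Ideal R) (hfg : P.FG) (hP : IsIPrime I P) (hIP : I * P ≤ P ^ 3) :
    IsWeaklyPrime P := by
  obtain ⟨hPtop, hPpr⟩ := hP
  refine ⟨hPtop, fun a b hab hne => ?_⟩
  by_cases hprime : ∀ x y : R, x * y ∈ P → x ∈ P ∨ y ∈ P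
  · exact hprime a b hab
  · -- P is not prime; derive P^2 ≤ I*P
    push_neg at hprime
    obtain ⟨x, y, hxy, hx, hy⟩ := hprime
    have hxyIP : x * y ∈ I * P := by
      by_contra h
      rcases hPpr x y hxy h with h' | h' <;> [exact hx h'; exact hy h']
    have hxP : ∀ p ∈ P, x * p ∈ I * P := by
      intro p hp
      by_contra h
      have hmem : x * (y + p) ∈ P := by
        rw [mul_add]; exact Ideal.add_mem _ hxy (Ideal.mul_mem_left _ _ hp)
      have hnot : x * (y + p) ∉ I * P := by
        rw [mul_add]
        intro hc
        exact h (by simpa using sub_mem hc hxyIP)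
      rcases hPpr _ _ hmem hnot with h' | h'
      · exact hx h'
      · exact hy (by simpa using sub_mem h' hp)
    have hyP : ∀ p ∈ P, p * y ∈ I * P := by
      intro p hp
      by_contra h
      have hmem : (x + p) * y ∈ P := by
        rw [add_mul]; exact Ideal.add_mem _ hxy (Ideal.mul_mem_right _ _ hp)
      have hnot : (x + p) * y ∉ I * P := by
        rw [add_mul]
        intro hc
        exact h (by simpa using sub_mem hc hxyIP)
      rcases hPpr _ _ hmem hnot with h' | h'
      · exact hx (by simpa using sub_mem h' hp)
      · exact hy h'
    have hsq : P * P ≤ I * P := by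
      rw [Ideal.mul_le]
      intro p hp q hq
      by_contra h
      have hexp : (x + p) * (y + q) = x * y + x * q + p * y + p * q := by ring
      have hmem : (x + p) * (y + q) ∈ P := by
        rw [hexp]
        refine Ideal.add_mem _ (Ideal.add_mem _ (Ideal.add_mem _ ?_ ?_) ?_) ?_
        · exact Ideal.pow_le_self (by norm_num) (hIP hxyIP)
        · exact Ideal.mul_mem_left _ _ hq
        · exact Ideal.mul_mem_right _ _ hp
        · exact Ideal.mul_mem_right _ _ hp
      have hnot : (x + p) * (y + q) ∉ I * P := by
        rw [hexp]
        intro hc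
        have h4 := sub_mem (sub_mem (sub_mem hc hxyIP) (hxP q hq)) (hyP p hp)
        have heq : x * y + x * q + p * y + p * q - (x * y) - (x * q) - (p * y) = p * q := by ring
        rw [heq] at h4
        exact h h4
      rcases hPpr _ _ hmem hnot with h' | h'
      · exact hx (by simpa using sub_mem h' hp)
      · exact hy (by simpa using sub_mem h' hq)
    -- Nakayama: P^2 = 0
    have hle : P * P ≤ P • (P * P) := by
      calc P * P ≤ I * P := hsq
        _ ≤ P ^ 3 := hIP
        _ = P * (P * P) := by ring
        _ = P • (P * P) := (Ideal.smul_eq_mul P (P * P)).symm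
    obtain ⟨r, hr1, hr0⟩ :=
      Submodule.exists_sub_one_mem_and_smul_eq_zero_of_fg_of_le_smul P (P * P) (Submodule.FG.mul hfg hfg) hle
    obtain ⟨e, heP, hfix⟩ : ∃ e ∈ P, ∀ n ∈ P * P, n = e * n := by
      refine ⟨1 - r, by simpa using P.neg_mem hr1, fun n hn => ?_⟩
      have h0 := hr0 n hn
      rw [smul_eq_mul] at h0
      linear_combination h0
    have he2 : e * e ∈ P * P := Ideal.mul_mem_mul heP heP
    have h3 : e * e = e * (e * e) := hfix _ he2
    have h3' : e ^ 2 = e ^ 3 := by linear_combination h3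
    have hidem : IsIdempotentElem (e * e) := by
      show e * e * (e * e) = e * e
      have h4 : e ^ 4 = e ^ 2 := by
        calc e ^ 4 = e ^ 3 * e := by ring
          _ = e ^ 2 * e := by rw [← h3']
          _ = e ^ 3 := by ring
          _ = e ^ 2 := h3'.symm
      linear_combination h4
    have he20 : e * e = 0 := by
      rcases hind _ hidem with h | h
      · exact h
      · exact absurd (P.eq_top_iff_one.mpr (h ▸ Ideal.mul_mem_left _ _ heP)) hPtop
    have hP2zero : ∀ n ∈ P * P, n = 0 := by
      intro n hn
      have h1 : n = e * n := hfix n hn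
      have h2 : e * n = e * (e * n) :=
        hfix _ (Ideal.mul_mem_mul heP (Ideal.mul_le_left hn))
      calc n = e * (e * n) := by rw [← h2, ← h1]
        _ = (e * e) * n := by ring
        _ = 0 := by rw [he20, zero_mul]
    -- hence I*P = 0, so a*b ∉ I*P
    have habIP : a * b ∉ I * P := by
      intro hc
      refine hne (hP2zero _ ?_)
      have : a * b ∈ P ^ 3 := hIP hc
      have h32 : P ^ 3 ≤ P ^ 2 := Ideal.pow_le_pow_right (by norm_num)
      rw [pow_two] at h32
      exact h32 this
    exact hPpr a b hab habIP
end

section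
/- Let P be a proper ideal of a commutative ring R with identity and I an ideal of R. Then P is an I-prime ideal if and only if for all ideals J and K of R, J·K ⊆ P and J·K ⊄ I·P imply J ⊆ P or K ⊆ P. -/
theorem stmt_10 {R : Type*} [CommRing R] (I P : Ideal R) (hP : P ≠ ⊤) :
    IsIPrime I P ↔
      ∀ J K : Ideal R, J * K ≤ P → ¬ (J * K ≤ I * P) → J ≤ P ∨ K ≤ P := by
  constructor
  · rintro ⟨-, hI⟩ J K hJK hJKIP
    by_contra h
    push_neg at h
    obtain ⟨hJ, hK⟩ := h
    obtain ⟨a, haJ, haP⟩ := SetLike.not_le_iff_exists.mp hJ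
    obtain ⟨b, hbK, hbP⟩ := SetLike.not_le_iff_exists.mp hK
    apply hJKIP
    have key : ∀ x y : R, x ∉ P → y ∉ P → x * y ∈ P → x * y ∈ I * P := by
      intro x y hx hy hxy
      by_contra hn
      rcases hI x y hxy hn with h | h
      · exact hx h
      · exact hy h
    refine Ideal.mul_le.mpr fun j hj k hk => ?_
    have hjk : j * k ∈ P := hJK (Ideal.mul_mem_mul hj hk)
    have hjb : j * b ∈ P := hJK (Ideal.mul_mem_mul hj hbK)
    have hak : a * k ∈ P := hJK (Ideal.mul_mem_mul haJ hk)
    have hab : a * b ∈ P := hJK (Ideal.mul_mem_mul haJ hbK)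
    have habI : a * b ∈ I * P := key a b haP hbP hab
    by_cases hjP : j ∈ P
    · have hjaP : j + a ∉ P := fun h => haP (by simpa using P.sub_mem h hjP)
      have hjbI : j * b ∈ I * P := by
        have h1 : (j + a) * b ∈ P := by
          have e : (j + a) * b = j * b + a * b := by ring
          rw [e]; exact P.add_mem hjb hab
        have h2 : (j + a) * b ∈ I * P := key _ _ hjaP hbP h1
        have e : j * b = (j + a) * b - a * b := by ring
        rw [e]; exact Submodule.sub_mem _ h2 habI
      by_cases hkP : k ∈ P
      · have hkbP : k + b ∉ P := fun h => hbP (by simpa using P.sub_mem h hkP)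
        have hakI : a * k ∈ I * P := by
          have h1 : a * (k + b) ∈ P := by
            have e : a * (k + b) = a * k + a * b := by ring
            rw [e]; exact P.add_mem hak hab
          have h2 : a * (k + b) ∈ I * P := key _ _ haP hkbP h1
          have e : a * k = a * (k + b) - a * b := by ring
          rw [e]; exact Submodule.sub_mem _ h2 habI
        have h1 : (j + a) * (k + b) ∈ P := by
          have e : (j + a) * (k + b) = j * k + j * b + (a * k + a * b) := by ring
          rw [e]; exact P.add_mem (P.add_mem hjk hjb) (P.add_mem hak hab)
        have h2 : (j + a) * (k + b) ∈ I * P := key _ _ hjaP hkbP h1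
        have e : j * k = (j + a) * (k + b) - j * b - a * k - a * b := by ring
        rw [e]
        exact Submodule.sub_mem _ (Submodule.sub_mem _ (Submodule.sub_mem _ h2 hjbI) hakI) habI
      · have hakI : a * k ∈ I * P := key _ _ haP hkP hak
        have h1 : (j + a) * k ∈ P := by
          have e : (j + a) * k = j * k + a * k := by ring
          rw [e]; exact P.add_mem hjk hak
        have h2 : (j + a) * k ∈ I * P := key _ _ hjaP hkP h1
        have e : j * k = (j + a) * k - a * k := by ring
        rw [e]; exact Submodule.sub_mem _ h2 hakI
    · by_cases hkP : k ∈ P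
      · have hkbP : k + b ∉ P := fun h => hbP (by simpa using P.sub_mem h hkP)
        have hjbI : j * b ∈ I * P := key _ _ hjP hbP hjb
        have h1 : j * (k + b) ∈ P := by
          have e : j * (k + b) = j * k + j * b := by ring
          rw [e]; exact P.add_mem hjk hjb
        have h2 : j * (k + b) ∈ I * P := key _ _ hjP hkbP h1
        have e : j * k = j * (k + b) - j * b := by ring
        rw [e]; exact Submodule.sub_mem _ h2 hjbI
      · exact key _ _ hjP hkP hjk
  · intro h
    refine ⟨hP, fun a b hab habI => ?_⟩
    have h1 : Ideal.span {a} * Ideal.span {b} ≤ P := by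
      rw [Ideal.span_singleton_mul_span_singleton, Ideal.span_singleton_le_iff_mem]
      exact hab
    have h2 : ¬ (Ideal.span {a} * Ideal.span {b} ≤ I * P) := by
      rw [Ideal.span_singleton_mul_span_singleton, Ideal.span_singleton_le_iff_mem]
      exact habI
    rcases h _ _ h1 h2 with hle | hle
    · exact Or.inl (hle (Ideal.mem_span_singleton_self a))
    · exact Or.inr (hle (Ideal.mem_span_singleton_self b))
end

section
/- Let P be a proper ideal of a commutative ring R with identity and I an ideal of R. Then the following are equivalent: (1) P is an I-prime ideal; (2) for every r ∈ R \ P, the colon ideal (P : r) equals the set-theoretic union P ∪ (I·P : r); (3) for every r ∈ R \ P, (P : r) = P or (P : r) = (I·P : r). Here (J : r) = {s ∈ R : rs ∈ J}. -/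
/-! Both inclusions `P ⊆ (P : r)` and `(I·P : r) ⊆ (P : r)` always hold, so (2) merely says
`(P : r) ⊆ P ∪ (I·P : r)` for `r ∉ P`, which is `I`-primeness read off at the element `r`.
Since an ideal covered by two ideals lies in one of them, that inclusion is in turn equivalent
to `(P : r)` being equal to `P` or to `(I·P : r)`. -/

namespace Ideal

variable {R : Type*}

theorem coe_eq_union_iff_subset [Semiring R] {A B C : Ideal R} (hB : B ≤ A) (hC : C ≤ A) :
    (A : Set R) = (B : Set R) ∪ C ↔ (A : Set R) ⊆ (B : Set R) ∪ C :=
  ⟨fun h ↦ h.le, fun h ↦ h.antisymm (Set.union_subset hB hC)⟩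

theorem coe_eq_union_iff [Ring R] {A B C : Ideal R} (hB : B ≤ A) (hC : C ≤ A) :
    (A : Set R) = (B : Set R) ∪ C ↔ (A : Set R) = B ∨ (A : Set R) = C := by
  simp only [SetLike.coe_set_eq]
  calc (A : Set R) = (B : Set R) ∪ C ↔ (A : Set R) ⊆ (B : Set R) ∪ C :=
        coe_eq_union_iff_subset hB hC
    _ ↔ A ≤ B ∨ A ≤ C := subset_union
    _ ↔ A = B ∨ A = C :=
        or_congr ⟨fun h ↦ h.antisymm hB, le_of_eq⟩ ⟨fun h ↦ h.antisymm hC, le_of_eq⟩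

variable [CommRing R]

/-- The colon ideal `(J : r) = {s | r * s ∈ J}`. -/
abbrev colonElem (J : Ideal R) (r : R) : Ideal R :=
  Submodule.comap (LinearMap.mulLeft R r) J

theorem coe_colonElem (J : Ideal R) (r : R) : (J.colonElem r : Set R) = {s | r * s ∈ J} :=
  rfl

theorem le_colonElem (J : Ideal R) (r : R) : J ≤ J.colonElem r :=
  fun _ hs ↦ J.mul_mem_left r hs

theorem colonElem_mono {J K : Ideal R} (h : J ≤ K) (r : R) : J.colonElem r ≤ K.colonElem r :=
  fun _ hs ↦ h hs

theorem isIPrime_iff_colonElem_subset {I P : Ideal R} (hP : P ≠ ⊤) :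
    IsIPrime I P ↔
      ∀ r ∉ P, (P.colonElem r : Set R) ⊆ (P : Set R) ∪ (I * P).colonElem r := by
  simp only [IsIPrime, hP, ne_eq, not_false_eq_true, true_and, coe_colonElem,
    Set.subset_def, Set.mem_union, Set.mem_ofPred_eq, SetLike.mem_coe]
  refine forall_congr' fun r ↦ ?_
  constructor
  · intro h hr s hs
    by_contra! hs'
    exact (h s hs hs'.2).elim hr hs'.1
  · intro h s hs hs'
    by_cases hr : r ∈ P
    · exact .inl hr
    · exact .inr ((h hr s hs).resolve_right hs')

end Ideal

theorem stmt_11 {R : Type*} [CommRing R] (I P : Ideal R) (hP : P ≠ ⊤) :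
    List.TFAE
      [IsIPrime I P,
       ∀ r : R, r ∉ P →
         {s : R | r * s ∈ P} = (P : Set R) ∪ {s : R | r * s ∈ I * P},
       ∀ r : R, r ∉ P →
         {s : R | r * s ∈ P} = (P : Set R) ∨
           {s : R | r * s ∈ P} = {s : R | r * s ∈ I * P}] := by
  have hP_le (r : R) : P ≤ P.colonElem r := P.le_colonElem r
  have hIP_le (r : R) : (I * P).colonElem r ≤ P.colonElem r :=
    Ideal.colonElem_mono Ideal.mul_le_right r
  simp only [← Ideal.coe_colonElem]
  tfae_have 1 ↔ 2 := by
    rw [Ideal.isIPrime_iff_colonElem_subset hP]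
    exact forall₂_congr fun r _ ↦ (Ideal.coe_eq_union_iff_subset (hP_le r) (hIP_le r)).symm
  tfae_have 2 ↔ 3 := forall₂_congr fun r _ ↦ Ideal.coe_eq_union_iff (hP_le r) (hIP_le r)
  tfae_finish
end

section
/- Let P be an I-prime ideal of a commutative ring R with identity and let J ⊆ P be an ideal of R. Then the image P/J of P in the quotient ring R/J is an Ī-prime ideal of R/J, where Ī = (I + J)/J is the image of I in R/J. -/
/-!
Because `J ≤ P`, the ideal `P` is the full preimage of its image in `R/J`, so membership in
`P/J` can be tested on representatives. Since the image of `I * P` is `Ī * (P/J)`, a product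
lying outside `Ī * (P/J)` has representatives whose product lies outside `I * P`, and the
`I`-primality of `P` applies to them.
-/

open Ideal Function

theorem Ideal.comap_map_eq_self_of_ker_le {R S F : Type*} [Ring R] [Ring S] [FunLike F R S]
    [RingHomClass F R S] {f : F} (hf : Surjective f) {P : Ideal R} (hP : RingHom.ker f ≤ P) :
    (P.map f).comap f = P := by
  rw [comap_map_of_surjective' f hf, sup_eq_left.mpr hP]

theorem IsIPrime.map_of_surjective {R S F : Type*} [CommRing R] [CommRing S] [FunLike F R S]
    [RingHomClass F R S] {f : F} (hf : Surjective f) {I P : Ideal R} (hk : RingHom.ker f ≤ P)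
    (hP : IsIPrime I P) : IsIPrime (I.map f) (P.map f) := by
  have hcomap := comap_map_eq_self_of_ker_le hf hk
  refine ⟨fun htop => hP.1 (by rw [← hcomap, htop, comap_top]), fun a b hab hnab => ?_⟩
  obtain ⟨x, rfl⟩ := hf a
  obtain ⟨y, rfl⟩ := hf b
  have hxy : x * y ∈ P := by
    rw [← hcomap, mem_comap, map_mul]
    exact hab
  have hxy' : x * y ∉ I * P := fun h =>
    hnab (by rw [← map_mul, ← Ideal.map_mul]; exact mem_map_of_mem f h)
  exact (hP.2 x y hxy hxy').imp (mem_map_of_mem f) (mem_map_of_mem f)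

theorem stmt_12 {R : Type*} [CommRing R] (I P J : Ideal R) (hJP : J ≤ P)
    (hP : IsIPrime I P) :
    IsIPrime (I.map (Ideal.Quotient.mk J)) (P.map (Ideal.Quotient.mk J)) :=
  hP.map_of_surjective Quotient.mk_surjective (by rwa [mk_ker])
end

section
/- Let R₁ and R₂ be commutative rings with identity, I₁ an ideal of R₁, and P₁ an I₁-prime ideal of R₁. Then P₁ × R₂ is an (I₁ × R₂)-prime ideal of the product ring R₁ × R₂. -/
namespace Ideal

variable {R S : Type*} [CommRing R] [CommRing S]

theorem prod_mul_prod (I₁ I₂ : Ideal R) (J₁ J₂ : Ideal S) :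
    prod I₁ J₁ * prod I₂ J₂ = prod (I₁ * I₂) (J₁ * J₂) := by
  rw [ideal_prod_eq (prod I₁ J₁ * prod I₂ J₂), Ideal.map_mul, Ideal.map_mul, map_fst_prod,
    map_fst_prod, map_snd_prod, map_snd_prod]

end Ideal

theorem IsIPrime.prod_top {R S : Type*} [CommRing R] [CommRing S] {I P : Ideal R}
    (hP : IsIPrime I P) : IsIPrime (Ideal.prod I (⊤ : Ideal S)) (Ideal.prod P ⊤) := by
  obtain ⟨hP_ne_top, hP_prime⟩ := hP
  refine ⟨fun h ↦ hP_ne_top (Ideal.prod_eq_top_iff.mp h).1, ?_⟩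
  rintro ⟨a, s⟩ ⟨b, t⟩ hab hab_not
  rw [Ideal.prod_mul_prod, Ideal.top_mul] at hab_not
  simp only [Prod.mk_mul_mk, Ideal.mem_prod, Submodule.mem_top, and_true] at hab hab_not ⊢
  exact hP_prime a b hab hab_not

theorem stmt_13 {R₁ R₂ : Type*} [CommRing R₁] [CommRing R₂]
    (I₁ P₁ : Ideal R₁) (hP₁ : IsIPrime I₁ P₁) :
    IsIPrime (Ideal.prod I₁ (⊤ : Ideal R₂)) (Ideal.prod P₁ (⊤ : Ideal R₂)) :=
  hP₁.prod_top
end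

section
/- Let R₁ and R₂ be commutative rings with identity, and let P₁, I₁ be ideals of R₁ and P₂, I₂ ideals of R₂ such that P₁ × P₂ is an (I₁ × I₂)-prime ideal of R₁ × R₂. Then: (a) if P₁ is a proper ideal of R₁, then P₁ is an I₁-prime ideal of R₁ (and symmetrically for P₂); (b) if moreover P₁ ≠ I₁·P₁, then P₁ = R₁ or P₂ = R₂. -/
/-! Products are computed componentwise, so `(I₁ × I₂)(P₁ × P₂) ⊆ I₁P₁ × I₂P₂`. Hence `(a, 0)`
and `(b, 0)` test the `I₁`-primality of `P₁` inside `P₁ × P₂`, and if `p ∈ P₁ \ I₁P₁` then the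
factorisation `(p, 0) = (1, 0) * (p, 1)` forces `1 ∈ P₁` or `1 ∈ P₂`. -/

namespace Ideal

variable {R₁ R₂ : Type*} [CommRing R₁] [CommRing R₂]

theorem prod_mul_prod_le (I₁ P₁ : Ideal R₁) (I₂ P₂ : Ideal R₂) :
    prod I₁ I₂ * prod P₁ P₂ ≤ prod (I₁ * P₁) (I₂ * P₂) := by
  rw [mul_le]
  intro r hr s hs
  rw [mem_prod] at hr hs ⊢
  exact ⟨mul_mem_mul hr.1 hs.1, mul_mem_mul hr.2 hs.2⟩

end Ideal

namespace IsIPrime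

variable {R₁ R₂ : Type*} [CommRing R₁] [CommRing R₂] {I₁ P₁ : Ideal R₁} {I₂ P₂ : Ideal R₂}

theorem of_prod_left (h : IsIPrime (Ideal.prod I₁ I₂) (Ideal.prod P₁ P₂)) (hP₁ : P₁ ≠ ⊤) :
    IsIPrime I₁ P₁ := by
  refine ⟨hP₁, fun a b hab hnab => ?_⟩
  have hmem : ((a, 0) : R₁ × R₂) * (b, 0) ∈ Ideal.prod P₁ P₂ := by
    simpa [Ideal.mem_prod] using hab
  have hnmem : ((a, 0) : R₁ × R₂) * (b, 0) ∉ Ideal.prod I₁ I₂ * Ideal.prod P₁ P₂ :=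
    fun hI => hnab ((Ideal.mem_prod _ _).mp (Ideal.prod_mul_prod_le _ _ _ _ hI)).1
  simpa [Ideal.mem_prod] using h.2 _ _ hmem hnmem

theorem of_prod_right (h : IsIPrime (Ideal.prod I₁ I₂) (Ideal.prod P₁ P₂)) (hP₂ : P₂ ≠ ⊤) :
    IsIPrime I₂ P₂ := by
  refine ⟨hP₂, fun a b hab hnab => ?_⟩
  have hmem : ((0, a) : R₁ × R₂) * (0, b) ∈ Ideal.prod P₁ P₂ := by
    simpa [Ideal.mem_prod] using hab
  have hnmem : ((0, a) : R₁ × R₂) * (0, b) ∉ Ideal.prod I₁ I₂ * Ideal.prod P₁ P₂ :=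
    fun hI => hnab ((Ideal.mem_prod _ _).mp (Ideal.prod_mul_prod_le _ _ _ _ hI)).2
  simpa [Ideal.mem_prod] using h.2 _ _ hmem hnmem

theorem eq_top_or_eq_top_of_prod (h : IsIPrime (Ideal.prod I₁ I₂) (Ideal.prod P₁ P₂))
    (hP₁ : P₁ ≠ I₁ * P₁) : P₁ = ⊤ ∨ P₂ = ⊤ := by
  obtain ⟨p, hp, hpI⟩ := SetLike.exists_of_lt (lt_of_le_of_ne Ideal.mul_le_right hP₁.symm)
  have hmem : ((1, 0) : R₁ × R₂) * (p, 1) ∈ Ideal.prod P₁ P₂ := by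
    simpa [Ideal.mem_prod] using hp
  have hnmem : ((1, 0) : R₁ × R₂) * (p, 1) ∉ Ideal.prod I₁ I₂ * Ideal.prod P₁ P₂ := fun hI =>
    hpI (by simpa using ((Ideal.mem_prod _ _).mp (Ideal.prod_mul_prod_le _ _ _ _ hI)).1)
  rcases h.2 _ _ hmem hnmem with h₁ | h₂
  · exact Or.inl ((Ideal.eq_top_iff_one _).mpr ((Ideal.mem_prod _ _).mp h₁).1)
  · exact Or.inr ((Ideal.eq_top_iff_one _).mpr ((Ideal.mem_prod _ _).mp h₂).2)

end IsIPrime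

theorem stmt_14 {R₁ R₂ : Type*} [CommRing R₁] [CommRing R₂]
    (I₁ P₁ : Ideal R₁) (I₂ P₂ : Ideal R₂)
    (h : IsIPrime (Ideal.prod I₁ I₂) (Ideal.prod P₁ P₂)) :
    (P₁ ≠ ⊤ → IsIPrime I₁ P₁) ∧ (P₂ ≠ ⊤ → IsIPrime I₂ P₂) ∧
      (P₁ ≠ I₁ * P₁ → P₁ = ⊤ ∨ P₂ = ⊤) :=
  ⟨h.of_prod_left, h.of_prod_right, h.eq_top_or_eq_top_of_prod⟩
end

section
/- Let R be a commutative ring with identity, S a multiplicatively closed subset (submonoid) of R, and P an I-prime ideal of R with S ∩ P = ∅. Then the extension S⁻¹P of P to the localization S⁻¹R is an S⁻¹I-prime ideal of S⁻¹R, where S⁻¹J denotes the extension of an ideal J of R along the localization map R → S⁻¹R. -/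
/-!
Every element of `S⁻¹R` is a unit multiple of the image of an element of `R`, so it suffices to
test the `S⁻¹I`-prime condition on images `a, b` of elements of `R`. If `ab ∈ S⁻¹P` then
`uab ∈ P` for some `u ∈ S`, and `ab ∉ S⁻¹(IP)` forces `uab ∉ IP`. Applying the `I`-prime property
to the factorisation `(ua) · b` puts `ua` or `b` in `P`, hence `a` or `b` in `S⁻¹P`.
-/

namespace IsLocalization

variable {R : Type*} [CommRing R] {S : Type*} [CommRing S] [Algebra R S]

theorem isIPrime_of_forall_algebraMap (M : Submonoid R) [IsLocalization M S] {I P : Ideal S}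
    (hP : P ≠ ⊤)
    (h : ∀ a b : R, algebraMap R S (a * b) ∈ P → algebraMap R S (a * b) ∉ I * P →
      algebraMap R S a ∈ P ∨ algebraMap R S b ∈ P) :
    IsIPrime I P := by
  refine ⟨hP, fun x y hxy hxyIP => ?_⟩
  obtain ⟨⟨a, s⟩, rfl⟩ := mk'_surjective M x
  obtain ⟨⟨b, t⟩, rfl⟩ := mk'_surjective M y
  rw [← mk'_mul, mk'_mem_iff] at hxy hxyIP
  simpa only [mk'_mem_iff] using h a b hxy hxyIP

theorem isIPrime_map (M : Submonoid R) [IsLocalization M S] {I P : Ideal R} (hP : IsIPrime I P)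
    (hMP : Disjoint (M : Set R) P) :
    IsIPrime (I.map (algebraMap R S)) (P.map (algebraMap R S)) := by
  refine isIPrime_of_forall_algebraMap M
    ((map_algebraMap_ne_top_iff_disjoint M S P).2 hMP) fun a b hab habIP => ?_
  rw [← Ideal.map_mul] at habIP
  obtain ⟨u, hu, huab⟩ := (algebraMap_mem_map_algebraMap_iff M S P _).1 hab
  have huabIP : u * a * b ∉ I * P := fun h =>
    habIP ((algebraMap_mem_map_algebraMap_iff M S _ _).2 ⟨u, hu, (mul_assoc u a b).symm ▸ h⟩)
  rcases hP.2 (u * a) b (mul_assoc u a b ▸ huab) huabIP with hua | hb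
  · exact .inl ((algebraMap_mem_map_algebraMap_iff M S P a).2 ⟨u, hu, hua⟩)
  · exact .inr (Ideal.mem_map_of_mem _ hb)

end IsLocalization

theorem stmt_19 {R : Type*} [CommRing R] (S : Submonoid R) (I P : Ideal R)
    (hP : IsIPrime I P) (hSP : Disjoint (S : Set R) (P : Set R)) :
    IsIPrime (I.map (algebraMap R (Localization S)))
      (P.map (algebraMap R (Localization S))) :=
  IsLocalization.isIPrime_map S hP hSP
end
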